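/- Let N ≥ 2 and let M_1,…,M_N be projective measurements on ℂ^d given by orthonormal bases {|u^m_i⟩}, and let |ψ⟩ be a unit vector in ℂ^d with outcome probabilities p^m_i = |⟨u^m_i|ψ⟩|². Then the Shannon entropies satisfy ∑_{m=1}^N H(M_m) ≥ −log₂(h), where h = max_{i_1,…,i_N} ∏_{m=1}^N (1 + √(c(u^m_{i_m}, u^{m+1}_{i_{m+1}})))/2, with the convention u^{N+1} := u^1. -/

import Mathlib

open scoped BigOperators ComplexOrder

noncomputable section

/-- Standard inner product `⟨a|b⟩` on `ℂ^d` (conjugate-linear in the first argument). -/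
def inn {d : ℕ} (a b : Fin d → ℂ) : ℂ := ∑ k, (starRingEnd ℂ) (a k) * b k

/-- The overlap `c(a,b) = |⟨a|b⟩|²`. -/
def ov {d : ℕ} (a b : Fin d → ℂ) : ℝ := ‖inn a b‖ ^ 2

/-- `u` lists the vectors of an orthonormal basis of `ℂ^d`. -/
def IsONB {d : ℕ} (u : Fin d → Fin d → ℂ) : Prop :=
  ∀ i j, inn (u i) (u j) = if i = j then 1 else 0

/-- Shannon entropy (base 2) of a probability vector; note `Real.logb 2 0 = 0`. -/
def shannon {d : ℕ} (p : Fin d → ℝ) : ℝ := -∑ i, p i * Real.logb 2 (p i)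

/-- Outcome probabilities `p_i = ⟨u_i|ρ|u_i⟩` of a projective measurement on the state `ρ`. -/
def probM {d : ℕ} (ρ : Matrix (Fin d) (Fin d) ℂ) (v : Fin d → Fin d → ℂ) (i : Fin d) : ℝ :=
  (dotProduct (star (v i)) (ρ.mulVec (v i))).re

open Classical in
/-- Von Neumann entropy (base 2): `S(ρ) = -∑ λ_k log₂ λ_k` over the eigenvalues of `ρ`. -/
def vNEnt {ι : Type} [Fintype ι] [DecidableEq ι] (A : Matrix ι ι ℂ) : ℝ :=
  if h : A.IsHermitian then -∑ k, h.eigenvalues k * Real.logb 2 (h.eigenvalues k) else 0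

open Classical in
/-- Matrix base-2 logarithm on the support, via the spectral decomposition
(eigenvalue `0` is sent to `0` since `Real.logb 2 0 = 0`). -/
def mlog2 {ι : Type} [Fintype ι] [DecidableEq ι] (A : Matrix ι ι ℂ) : Matrix ι ι ℂ :=
  if h : A.IsHermitian then
    (h.eigenvectorUnitary : Matrix ι ι ℂ) *
      Matrix.diagonal (fun k => (Real.logb 2 (h.eigenvalues k) : ℂ)) *
      star (h.eigenvectorUnitary : Matrix ι ι ℂ)
  else 0

/-- Quantum relative entropy `S(ρ‖σ) = Tr(ρ log₂ ρ) - Tr(ρ log₂ σ)`. -/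
def relEnt {ι : Type} [Fintype ι] [DecidableEq ι] (ρ σ : Matrix ι ι ℂ) : ℝ :=
  ((ρ * mlog2 ρ).trace - (ρ * mlog2 σ).trace).re

/-- The bound `b` of Theorem 2 of the paper, for `N = n + 2` measurements (indexed `0,…,n+1`):
`b = max_{i_N} { ∑_{i_2,…,i_{N-1}} max_{i_1}[c(u^1_{i_1},u^2_{i_2})]
  ∏_{m=2}^{N-1} c(u^m_{i_m},u^{m+1}_{i_{m+1}}) }`.
Here `g : Fin n → Fin d` lists the middle indices `(i_2,…,i_{N-1})`, `jN = i_N`, and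
`Fin.snoc g jN : Fin (n+1) → Fin d` is the chain `(i_2,…,i_N)`. -/
def bBound {d n : ℕ} (u : Fin (n + 2) → Fin d → Fin d → ℂ) : ℝ :=
  ⨆ jN : Fin d, ∑ g : Fin n → Fin d,
    (⨆ i1 : Fin d, ov (u 0 i1) (u 1 ((Fin.snoc g jN : Fin (n + 1) → Fin d) 0))) *
      ∏ k : Fin n, ov (u k.succ.castSucc ((Fin.snoc g jN : Fin (n + 1) → Fin d) k.castSucc))
        (u k.succ.succ ((Fin.snoc g jN : Fin (n + 1) → Fin d) k.succ))

/-- Partial trace over system `A`: `(Tr_A X)_{j j'} = ∑_i X_{(i,j),(i,j')}`. -/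
def trA {d dB : ℕ} (X : Matrix (Fin d × Fin dB) (Fin d × Fin dB) ℂ) :
    Matrix (Fin dB) (Fin dB) ℂ :=
  Matrix.of fun j j' => ∑ i, X (i, j) (i, j')

/-- The operator `|a⟩⟨a| ⊗ I` acting on `ℂ^d ⊗ ℂ^{dB}`. -/
def projA {d : ℕ} (dB : ℕ) (a : Fin d → ℂ) : Matrix (Fin d × Fin dB) (Fin d × Fin dB) ℂ :=
  Matrix.kroneckerMap (· * ·) (Matrix.vecMulVec a (star a)) (1 : Matrix (Fin dB) (Fin dB) ℂ)

end

/-!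
Let `p_m` be the largest outcome probability of the `m`-th measurement, attained at `i_m`.
Shannon entropy dominates min-entropy, so `∑ H(M_m) ≥ -log₂ ∏ p_m`. For unit vectors `a, b, ψ`
one has `|⟨a|ψ⟩|² + |⟨b|ψ⟩|² ≤ 1 + |⟨a|b⟩|`, hence by AM–GM
`p_m p_{m+1} ≤ ((1 + √c(u^m_{i_m}, u^{m+1}_{i_{m+1}})) / 2)²`; multiplying these around the cycle
gives `(∏ p_m)² ≤ (∏ (1 + √c) / 2)²`, so `∏ p_m ≤ h`.
-/

open scoped InnerProductSpace
open WithLp (toLp)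

section InnerProductSpace

variable {𝕜 E : Type*} [RCLike 𝕜] [NormedAddCommGroup E] [InnerProductSpace 𝕜 E]

/-- Cauchy–Schwarz against `v = ⟪a, ψ⟫ • a + ⟪b, ψ⟫ • b`: `⟪v, ψ⟫` is the left-hand side `P`,
and `‖v‖² ≤ (1 + ‖⟪a, b⟫‖) P`. -/
theorem sq_norm_inner_add_sq_norm_inner_le {a b : E} (ha : ‖a‖ = 1) (hb : ‖b‖ = 1) (ψ : E) :
    ‖⟪a, ψ⟫_𝕜‖ ^ 2 + ‖⟪b, ψ⟫_𝕜‖ ^ 2 ≤ (1 + ‖⟪a, b⟫_𝕜‖) * ‖ψ‖ ^ 2 := by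
  set α := ⟪a, ψ⟫_𝕜
  set β := ⟪b, ψ⟫_𝕜
  set P := ‖α‖ ^ 2 + ‖β‖ ^ 2
  set v := α • a + β • b
  have hvψ : ⟪v, ψ⟫_𝕜 = (P : 𝕜) := by
    rw [inner_add_left, inner_smul_left, inner_smul_left, RCLike.conj_mul, RCLike.conj_mul]
    push_cast [P]; rfl
  have hv : ‖v‖ ^ 2 ≤ (1 + ‖⟪a, b⟫_𝕜‖) * P := by
    have hre : RCLike.re ⟪α • a, β • b⟫_𝕜 ≤ ‖α‖ * ‖β‖ * ‖⟪a, b⟫_𝕜‖ := by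
      refine (RCLike.re_le_norm _).trans_eq ?_
      rw [inner_smul_left, inner_smul_right, norm_mul, norm_mul, RCLike.norm_conj, mul_assoc]
    rw [norm_add_sq (𝕜 := 𝕜), norm_smul, norm_smul, ha, hb]
    nlinarith [two_mul_le_add_sq ‖α‖ ‖β‖, norm_nonneg ⟪a, b⟫_𝕜]
  have hCS : P ≤ ‖v‖ * ‖ψ‖ := by
    have := norm_inner_le_norm (𝕜 := 𝕜) v ψ
    rwa [hvψ, RCLike.norm_ofReal, abs_of_nonneg (by positivity)] at this
  rcases (show 0 ≤ P by positivity).eq_or_lt with hP | hP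
  · rw [← hP]; positivity
  · have : P * P ≤ P * ((1 + ‖⟪a, b⟫_𝕜‖) * ‖ψ‖ ^ 2) := by
      calc P * P ≤ (‖v‖ * ‖ψ‖) ^ 2 := by rw [← sq]; gcongr
        _ = ‖v‖ ^ 2 * ‖ψ‖ ^ 2 := mul_pow _ _ _
        _ ≤ (1 + ‖⟪a, b⟫_𝕜‖) * P * ‖ψ‖ ^ 2 := by gcongr
        _ = P * ((1 + ‖⟪a, b⟫_𝕜‖) * ‖ψ‖ ^ 2) := by ring
    exact le_of_mul_le_mul_left this hP

end InnerProductSpace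

theorem prod_le_prod_of_mul_add_le_sq {G : Type*} [AddGroup G] [Fintype G] {p r : G → ℝ}
    (s : G) (hp : ∀ m, 0 ≤ p m) (hr : ∀ m, 0 ≤ r m) (h : ∀ m, p m * p (m + s) ≤ r m ^ 2) :
    ∏ m, p m ≤ ∏ m, r m := by
  have hshift : ∏ m, p (m + s) = ∏ m, p m := Equiv.prod_comp (Equiv.addRight s) p
  have hsq : (∏ m, p m) ^ 2 ≤ (∏ m, r m) ^ 2 :=
    calc (∏ m, p m) ^ 2 = ∏ m, p m * p (m + s) := by rw [Finset.prod_mul_distrib, hshift, sq]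
      _ ≤ ∏ m, r m ^ 2 :=
        Finset.prod_le_prod (fun m _ => mul_nonneg (hp m) (hp _)) fun m _ => h m
      _ = (∏ m, r m) ^ 2 := Finset.prod_pow _ _ _
  exact (pow_le_pow_iff_left₀ (Finset.prod_nonneg fun m _ => hp m)
    (Finset.prod_nonneg fun m _ => hr m) two_ne_zero).1 hsq

theorem pos_of_sum_eq_one_of_forall_le {ι : Type*} [Fintype ι] {p : ι → ℝ} (h1 : ∑ i, p i = 1)
    {j : ι} (hj : ∀ i, p i ≤ p j) : 0 < p j := by
  by_contra! h
  have : ∑ i, p i ≤ 0 := Finset.sum_nonpos fun i _ => (hj i).trans h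
  linarith

theorem neg_logb_le_shannon {d : ℕ} {p : Fin d → ℝ} (h0 : ∀ i, 0 ≤ p i) (h1 : ∑ i, p i = 1)
    {j : Fin d} (hj : ∀ i, p i ≤ p j) : -Real.logb 2 (p j) ≤ shannon p := by
  have hpj := pos_of_sum_eq_one_of_forall_le h1 hj
  rw [shannon, neg_le_neg_iff]
  calc ∑ i, p i * Real.logb 2 (p i) ≤ ∑ i, p i * Real.logb 2 (p j) := by
        refine Finset.sum_le_sum fun i _ => ?_
        rcases (h0 i).eq_or_lt with hi | hi
        · simp [← hi]
        · exact mul_le_mul_of_nonneg_left (Real.logb_le_logb_of_le one_lt_two hi (hj i)) (h0 i)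
    _ = Real.logb 2 (p j) := by rw [← Finset.sum_mul, h1, one_mul]

section Coordinates

variable {d : ℕ}

theorem inn_eq_inner (a b : Fin d → ℂ) : inn a b = ⟪toLp 2 a, toLp 2 b⟫_ℂ := by
  simp [inn, EuclideanSpace.inner_toLp_toLp, dotProduct, mul_comm]

theorem ov_eq_sq_norm_inner (a b : Fin d → ℂ) : ov a b = ‖⟪toLp 2 a, toLp 2 b⟫_ℂ‖ ^ 2 := by
  rw [ov, inn_eq_inner]

theorem norm_toLp_eq_one {a : Fin d → ℂ} (ha : inn a a = 1) : ‖toLp 2 a‖ = 1 := by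
  rw [@norm_eq_sqrt_re_inner ℂ, ← inn_eq_inner, ha]
  simp

theorem ov_nonneg (a b : Fin d → ℂ) : 0 ≤ ov a b := sq_nonneg _

theorem ov_add_ov_le {a b ψ : Fin d → ℂ} (ha : inn a a = 1) (hb : inn b b = 1)
    (hψ : inn ψ ψ = 1) : ov a ψ + ov b ψ ≤ 1 + Real.sqrt (ov a b) := by
  have := sq_norm_inner_add_sq_norm_inner_le (𝕜 := ℂ) (norm_toLp_eq_one ha)
    (norm_toLp_eq_one hb) (toLp 2 ψ)
  rw [norm_toLp_eq_one hψ, one_pow, mul_one] at this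
  simpa only [ov_eq_sq_norm_inner, Real.sqrt_sq (norm_nonneg _)] using this

theorem ov_mul_ov_le {a b ψ : Fin d → ℂ} (ha : inn a a = 1) (hb : inn b b = 1)
    (hψ : inn ψ ψ = 1) : ov a ψ * ov b ψ ≤ ((1 + Real.sqrt (ov a b)) / 2) ^ 2 := by
  have hab := ov_add_ov_le ha hb hψ
  nlinarith [four_mul_le_sq_add (ov a ψ) (ov b ψ), ov_nonneg a ψ, ov_nonneg b ψ]

theorem IsONB.orthonormal {u : Fin d → Fin d → ℂ} (hu : IsONB u) :
    Orthonormal ℂ fun i => toLp 2 (u i) :=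
  orthonormal_iff_ite.2 fun i j => by rw [← inn_eq_inner]; exact hu i j

theorem IsONB.sum_ov {u : Fin d → Fin d → ℂ} (hu : IsONB u) (ψ : Fin d → ℂ) :
    ∑ i, ov (u i) ψ = ‖toLp 2 ψ‖ ^ 2 := by
  have hspan := hu.orthonormal.linearIndependent.span_eq_top_of_card_eq_finrank' (by simp)
  simpa [ov_eq_sq_norm_inner] using
    (OrthonormalBasis.mk hu.orthonormal hspan.ge).sum_sq_norm_inner_right (toLp 2 ψ)

end Coordinates

theorem shannon_entropy_uncertainty_pure_general {d n : ℕ}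
    (u : Fin (n + 2) → Fin d → Fin d → ℂ)
    (hu : ∀ m, IsONB (u m)) (ψ : Fin d → ℂ) (hψ : inn ψ ψ = 1) :
    ∑ m : Fin (n + 2), shannon (fun i => ov (u m i) ψ) ≥
      -Real.logb 2 (⨆ i : Fin (n + 2) → Fin d,
        ∏ m : Fin (n + 2), (1 + Real.sqrt (ov (u m (i m)) (u (m + 1) (i (m + 1))))) / 2) := by
  have hsum (m) : ∑ i, ov (u m i) ψ = 1 := by rw [(hu m).sum_ov, norm_toLp_eq_one hψ, one_pow]
  have : Nonempty (Fin d) := by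
    by_contra! h
    simpa using hsum 0
  choose I hI using fun m => Finite.exists_max fun i => ov (u m i) ψ
  set F := fun i : Fin (n + 2) → Fin d =>
    ∏ m : Fin (n + 2), (1 + Real.sqrt (ov (u m (i m)) (u (m + 1) (i (m + 1))))) / 2
  have hp (m) : 0 < ov (u m (I m)) ψ := pos_of_sum_eq_one_of_forall_le (hsum m) (hI m)
  have hunit (m i) : inn (u m i) (u m i) = 1 := by simpa using hu m i i
  have hprod : ∏ m, ov (u m (I m)) ψ ≤ F I :=
    prod_le_prod_of_mul_add_le_sq 1 (fun m => (hp m).le) (fun m => by positivity)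
      fun m => ov_mul_ov_le (hunit _ _) (hunit _ _) hψ
  have hsup : F I ≤ ⨆ i, F i := le_ciSup (Set.finite_range F).bddAbove I
  calc -Real.logb 2 (⨆ i, F i) ≤ -Real.logb 2 (∏ m, ov (u m (I m)) ψ) :=
        neg_le_neg <| Real.logb_le_logb_of_le one_lt_two (Finset.prod_pos fun m _ => hp m)
          (hprod.trans hsup)
    _ = ∑ m, -Real.logb 2 (ov (u m (I m)) ψ) := by
        rw [Real.logb_prod _ _ fun m _ => (hp m).ne', Finset.sum_neg_distrib]
    _ ≤ ∑ m, shannon fun i => ov (u m i) ψ :=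
        Finset.sum_le_sum fun m _ => neg_logb_le_shannon (fun i => ov_nonneg _ _) (hsum m) (hI m)

/-- for `N = n + 2 ≥ 2` projective measurements on a pure state `ψ`, the Shannon
entropies satisfy `∑_m H(M_m) ≥ -log₂ h` with
`h = max_{i_1,…,i_N} ∏_m (1 + √(c(u^m_{i_m},u^{m+1}_{i_{m+1}})))/2`, superscripts mod `N`. -/
theorem shannon_entropy_uncertainty_pure {d n : ℕ} (hd : 0 < d)
    (u : Fin (n + 2) → Fin d → Fin d → ℂ)
    (hu : ∀ m, IsONB (u m)) (ψ : Fin d → ℂ) (hψ : inn ψ ψ = 1) :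
    ∑ m : Fin (n + 2), shannon (fun i => ov (u m i) ψ) ≥
      -Real.logb 2 (⨆ i : Fin (n + 2) → Fin d,
        ∏ m : Fin (n + 2), (1 + Real.sqrt (ov (u m (i m)) (u (m + 1) (i (m + 1))))) / 2) :=
  shannon_entropy_uncertainty_pure_general u hu ψ hψ
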